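/- arXiv:2501.00639 — 4 statements merged into one kernel-verified Lean document; each statement's English description precedes it below -/
import Mathlib

section
/- Let G be a finite connected simple bipartite graph (i.e., 2-colorable) with minimum degree at least 2, and let r = |E| − |V| + 1. Then the polynomial ζ_G(u)^{-1} = (1 − u²)^{r−1} · det(I − A·u + Q·u²) ∈ ℤ[u] is an even polynomial: every coefficient of an odd power of u is zero. -/
open Polynomial Matrix

/-- The reciprocal of the Ihara zeta function of a finite simple graph `G`, as a polynomial
in `ℤ[u]`: `(1 - u²)^(r-1) * det(I - A·u + Q·u²)`, where `A` is the adjacency matrix,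
`Q = D - I` with `D` the degree matrix, and `r - 1 = |E| - |V|`. -/
noncomputable def iharaZetaInv {V : Type} [Fintype V] [DecidableEq V]
    (G : SimpleGraph V) [DecidableRel G.Adj] : Polynomial ℤ :=
  (1 - X ^ 2) ^ (G.edgeFinset.card - Fintype.card V) *
    ((1 : Matrix V V (Polynomial ℤ)) - (X : Polynomial ℤ) • G.adjMatrix (Polynomial ℤ) +
      (X ^ 2 : Polynomial ℤ) • Matrix.diagonal (fun v => (G.degree v : Polynomial ℤ) - 1)).det

private lemma coeff_comp_neg_X (p : Polynomial ℤ) (k : ℕ) :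
    (p.comp (-X)).coeff k = (-1) ^ k * p.coeff k := by
  induction p using Polynomial.induction_on' with
  | add p q hp hq => simp [add_comp, hp, hq, mul_add]
  | monomial n a =>
    have h1 : (monomial n a).comp (-X) = Polynomial.C ((-1) ^ n * a) * X ^ n := by
      rw [monomial_comp, neg_pow, C_mul, C_pow, C_neg, C_1]
      ring
    rw [h1, coeff_C_mul, coeff_X_pow, coeff_monomial]
    rcases eq_or_ne n k with rfl | h
    · simp
    · simp [if_neg h, if_neg (Ne.symm h)]

/-- If `G` is a finite connected simple bipartite graph with minimum degree at least 2, then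
`ζ_G(u)⁻¹` is an even polynomial: every coefficient of an odd power of `u` vanishes. -/
theorem iharaZetaInv_even_of_bipartite {V : Type} [Fintype V] [DecidableEq V]
    (G : SimpleGraph V) [DecidableRel G.Adj]
    (hconn : G.Connected) (hdeg : ∀ v : V, 2 ≤ G.degree v)
    (hbip : G.Colorable 2) :
    ∀ k : ℕ, Odd k → (iharaZetaInv G).coeff k = 0 := by
  intro k hk
  obtain ⟨c⟩ := hbip
  -- sign function from the 2-coloring
  set ε : V → Polynomial ℤ := fun v => if c v = 0 then 1 else -1 with hε
  have hε2 : ∀ v, ε v * ε v = 1 := by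
    intro v; simp only [hε]; split <;> ring
  have hεadj : ∀ i j, G.Adj i j → ε i * ε j = -1 := by
    intro i j h
    have hne : c i ≠ c j := c.valid h
    have key : ∀ a b : Fin 2, a ≠ b → ¬a = 0 → b = 0 := by decide
    simp only [hε]
    by_cases h0 : c i = 0
    · rw [if_pos h0, if_neg (fun hj => hne (h0.trans hj.symm))]; ring
    · rw [if_neg h0, if_pos (key _ _ hne h0)]; ring
  -- the ring endomorphism X ↦ -X
  set φ : Polynomial ℤ →+* Polynomial ℤ :=
    eval₂RingHom Polynomial.C (-X) with hφdef
  have hφ : ∀ p : Polynomial ℤ, φ p = p.comp (-X) := fun p => rfl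
  set M : Matrix V V (Polynomial ℤ) :=
    (1 : Matrix V V (Polynomial ℤ)) - (X : Polynomial ℤ) • G.adjMatrix (Polynomial ℤ) +
      (X ^ 2 : Polynomial ℤ) • Matrix.diagonal (fun v => (G.degree v : Polynomial ℤ) - 1)
    with hM
  set S : Matrix V V (Polynomial ℤ) := Matrix.diagonal ε with hS
  -- conjugation identity
  have hconj : φ.mapMatrix M = S * M * S := by
    ext i j
    have hmul : (S * M * S) i j = ε i * M i j * ε j := by
      rw [hS, Matrix.mul_diagonal, Matrix.diagonal_mul]
    rw [RingHom.mapMatrix_apply, Matrix.map_apply, hmul]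
    have hMij : M i j = (if i = j then 1 else 0) - X * G.adjMatrix (Polynomial ℤ) i j
        + X ^ 2 * (if i = j then (G.degree i : Polynomial ℤ) - 1 else 0) := by
      simp [hM, Matrix.one_apply, Matrix.diagonal_apply, Matrix.sub_apply, Matrix.add_apply]
    by_cases hij : i = j
    · subst hij
      have h1 : M i i = 1 + X ^ 2 * ((G.degree i : Polynomial ℤ) - 1) := by
        rw [hMij]; simp
      rw [h1]
      have h2 : ε i * (1 + X ^ 2 * ((G.degree i : Polynomial ℤ) - 1)) * ε i
          = (ε i * ε i) * (1 + X ^ 2 * ((G.degree i : Polynomial ℤ) - 1)) := by ring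
      rw [h2, hε2, one_mul, hφ]
      simp only [add_comp, one_comp, mul_comp, pow_comp, X_comp, sub_comp, natCast_comp]
      ring
    · have hD : M i j = -(X * G.adjMatrix (Polynomial ℤ) i j) := by
        rw [hMij]; simp [hij]
      rw [hD]
      by_cases hadj : G.Adj i j
      · have hA : G.adjMatrix (Polynomial ℤ) i j = 1 := by simp [hadj]
        rw [hA]
        have h3 : ε i * -(X * 1) * ε j = -(ε i * ε j) * X := by ring
        rw [h3, hεadj i j hadj, hφ]
        simp only [neg_comp, mul_comp, X_comp, one_comp]
        ring
      · have hA : G.adjMatrix (Polynomial ℤ) i j = 0 := by simp [hadj]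
        rw [hA]
        simp
  -- hence φ fixes the determinant
  have hdet : φ M.det = M.det := by
    rw [RingHom.map_det, hconj, Matrix.det_mul, Matrix.det_mul, hS, Matrix.det_diagonal]
    have h4 : (∏ v, ε v) * M.det * (∏ v, ε v) = ((∏ v, ε v) * (∏ v, ε v)) * M.det := by ring
    rw [h4, ← Finset.prod_mul_distrib]
    simp [hε2]
  -- φ fixes the whole polynomial
  have hfix : φ (iharaZetaInv G) = iharaZetaInv G := by
    unfold iharaZetaInv
    rw [_root_.map_mul, ← hM, hdet]
    congr 1
    rw [_root_.map_pow]
    congr 1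
    rw [_root_.map_sub, _root_.map_one, _root_.map_pow]
    have h5 : φ X = -X := by rw [hφ, X_comp]
    rw [h5]
    ring
  rw [hφ] at hfix
  have h6 := congrArg (fun p => p.coeff k) hfix
  simp only [coeff_comp_neg_X, hk.neg_one_pow] at h6
  linarith
end

section
/- For integers 3 ≤ m ≤ n, the double cycle graph G_{m,n} satisfies ζ_{G_{m,n}}(u)^{-1} = −3u^{2(m+n)} + 2u^{m+2n} + 2u^{2m+n} + u^{2n} + u^{2m} − 2u^n − 2u^m + 1 in ℤ[u]. -/
open Polynomial Matrix

/-- The double cycle graph `G_{m,n}`: two cycles `C_m` and `C_n` glued at a single common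
vertex.  Here the common vertex is `0`, the `m`-cycle is `0, 1, …, m-1, 0` and the `n`-cycle is
`0, m, m+1, …, m+n-2, 0`, on vertex set `Fin (m + n - 1)`. -/
def doubleCycleGraph (m n : ℕ) : SimpleGraph (Fin (m + n - 1)) :=
  SimpleGraph.fromRel (fun a b =>
    (b.val = a.val + 1 ∧ b.val ≤ m - 1) ∨
    (a.val = m - 1 ∧ b.val = 0) ∨
    (b.val = a.val + 1 ∧ m ≤ a.val) ∨
    (a.val = 0 ∧ b.val = m) ∨
    (a.val = m + n - 2 ∧ b.val = 0))

noncomputable instance (m n : ℕ) : DecidableRel (doubleCycleGraph m n).Adj :=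
  Classical.decRel _

/-!
Put `Δ(x) = I - x A + x² (D - I)`. Listing the hub of `G_{m,n}` last, `Δ(x)` is the block-diagonal
matrix of two path blocks `T = (1 + x²) I - x A(P_k)`, bordered by the hub row, which meets each path
in its two end vertices. On a path block, the geometric vector `(x^j)_j` and its reversal are mapped
to combinations of the two end basis vectors, so `T⁻¹` is explicit on them; expanding along the hub
(a Schur complement) then gives `det Δ(x)`. The same bordering, applied to the last vertex of a path,
gives `det T = 1 + x² + ⋯ + x^{2k}` by induction. All of this is done over a field, for `x` not a
root of unity, and applied to `x = X` in the fraction field of `ℤ[X]`; finally `|E| - |V| = 1`.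
-/

namespace Matrix

theorem det_fromBlocks_replicateCol_replicateRow_of_mulVec_eq {R m ι : Type*} [CommRing R]
    [Fintype m] [DecidableEq m] [Fintype ι] [DecidableEq ι] [Unique ι] {A : Matrix m m R}
    (hA : IsUnit A.det) {u y : m → R} (hy : A *ᵥ y = u) (v : m → R) (d : R) :
    (fromBlocks A (replicateCol ι u) (replicateRow ι v) (of fun _ _ => d)).det =
      A.det * (d - v ⬝ᵥ y) := by
  have := invertibleOfIsUnitDet A hA
  have hy' : ⅟A * replicateCol ι u = replicateCol ι y := by
    rw [← hy, ← replicateCol_mulVec, mulVec_mulVec, invOf_eq_nonsing_inv,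
      nonsing_inv_mul _ hA, one_mulVec]
  rw [det_fromBlocks₁₁, Matrix.mul_assoc, hy', replicateRow_mul_replicateCol,
    det_unique (_ : Matrix ι ι R)]
  rfl

end Matrix

instance (k : ℕ) : DecidableRel (SimpleGraph.pathGraph k).Adj :=
  fun _ _ => decidable_of_iff _ SimpleGraph.pathGraph_adj.symm

section PathBlock

variable {R : Type*} [CommRing R] (x : R)

/-- The block of `I - x A + x² (D - I)` on the vertices of a cycle other than the hub: they have
degree 2 and induce a path. -/
def pathBlock (k : ℕ) : Matrix (Fin k) (Fin k) R :=
  (1 + x ^ 2) • (1 : Matrix (Fin k) (Fin k) R) - x • (SimpleGraph.pathGraph k).adjMatrix R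

def powVec (k : ℕ) : Fin k → R := fun j => x ^ (j : ℕ)

def pathEnds (k : ℕ) : Fin (k + 1) → R := Pi.single 0 1 + Pi.single (Fin.last k) 1

theorem pathBlock_apply {k : ℕ} (i j : Fin k) :
    pathBlock x k i j =
      if i = j then 1 + x ^ 2 else if (i : ℕ) + 1 = j ∨ (j : ℕ) + 1 = i then -x else 0 := by
  simp only [pathBlock, Matrix.sub_apply, Matrix.smul_apply, one_apply,
    SimpleGraph.adjMatrix_apply, SimpleGraph.pathGraph_adj, smul_eq_mul]
  split_ifs <;> simp_all

theorem pathBlock_mulVec_apply (k : ℕ) (f : ℕ → R) (i : Fin k) :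
    (pathBlock x k *ᵥ (fun j => f j)) i =
      (1 + x ^ 2) * f i - x * ((if 0 < (i : ℕ) then f (i - 1) else 0) +
        if (i : ℕ) + 1 < k then f (i + 1) else 0) := by
  have hsplit (j : ℕ) : (if (i : ℕ) + 1 = j ∨ j + 1 = i then f j else 0) =
      (if j + 1 = i then f j else 0) + if (i : ℕ) + 1 = j then f j else 0 := by
    split_ifs <;> first | omega | simp
  simp only [pathBlock, sub_mulVec, smul_mulVec, one_mulVec, Pi.sub_apply, Pi.smul_apply,
    smul_eq_mul, SimpleGraph.adjMatrix_mulVec_apply]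
  congr 2
  rw [SimpleGraph.neighborFinset_eq_filter, Finset.sum_filter]
  simp only [SimpleGraph.pathGraph_adj]
  rw [Fin.sum_univ_eq_sum_range (fun j => if (i : ℕ) + 1 = j ∨ j + 1 = i then f j else 0),
    Finset.sum_congr rfl fun j _ => hsplit j, Finset.sum_add_distrib]
  have hi := i.isLt
  congr 1
  · rw [Finset.sum_eq_single (i - 1 : ℕ)]
    · split_ifs <;> first | rfl | omega
    · intro j _ hj
      rw [if_neg (by omega)]
    · intro h
      rw [if_neg]
      simp only [Finset.mem_range] at h
      omega
  · simp only [Finset.sum_ite_eq, Finset.mem_range]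

theorem pathBlock_mulVec_powVec (k : ℕ) :
    pathBlock x (k + 1) *ᵥ powVec x (k + 1) =
      Pi.single 0 1 + Pi.single (Fin.last k) (x ^ (k + 2)) := by
  ext ⟨i, hi⟩
  unfold powVec
  rw [pathBlock_mulVec_apply x (k + 1) (x ^ ·)]
  simp only [Pi.add_apply, Pi.single_apply, Fin.ext_iff, Fin.val_zero, Fin.val_last]
  rcases i with _ | i
  · rcases k with _ | k
    · simp
    · simp only [pow_zero, mul_one, lt_self_iff_false, ↓reduceIte, zero_add, lt_add_iff_pos_left,
        Order.lt_add_one_iff, zero_le, pow_one, Nat.right_eq_add, Nat.add_eq_zero_iff, one_ne_zero,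
        and_false, add_zero]
      ring
  · simp only [Nat.add_one_sub_one, lt_add_iff_pos_left, Nat.add_one_ne_zero, if_false]
    split_ifs <;> first | omega | (subst_vars; ring)

theorem pathBlock_submatrix_rev (k : ℕ) :
    (pathBlock x k).submatrix Fin.rev Fin.rev = pathBlock x k := by
  ext i j
  simp only [pathBlock, submatrix_apply, Matrix.sub_apply, Matrix.smul_apply, one_apply,
    Fin.rev_inj, SimpleGraph.adjMatrix_apply, SimpleGraph.pathGraph_adj, Fin.val_rev]
  congr 3
  apply propext
  omega

theorem pathBlock_mulVec_powVec_comp_rev (k : ℕ) :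
    pathBlock x (k + 1) *ᵥ (powVec x (k + 1) ∘ Fin.rev) =
      Pi.single 0 (x ^ (k + 2)) + Pi.single (Fin.last k) 1 := by
  rw [← pathBlock_submatrix_rev]
  change (pathBlock x (k + 1)).submatrix Fin.rev Fin.revPerm *ᵥ (powVec x (k + 1) ∘ Fin.revPerm)
    = _
  rw [submatrix_mulVec_equiv]
  ext i
  simp [Function.comp_def, pathBlock_mulVec_powVec, Pi.single_apply, Fin.rev_eq_iff, add_comm]

theorem pathBlock_mulVec_powVec_add_comp_rev (k : ℕ) :
    pathBlock x (k + 1) *ᵥ (powVec x (k + 1) + powVec x (k + 1) ∘ Fin.rev) =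
      (1 + x ^ (k + 2)) • pathEnds k := by
  rw [mulVec_add, pathBlock_mulVec_powVec, pathBlock_mulVec_powVec_comp_rev]
  ext i
  simp only [pathEnds, Pi.add_apply, Pi.smul_apply, Pi.single_apply, smul_eq_mul]
  split_ifs <;> ring

theorem pathEnds_dotProduct_powVec_add_comp_rev (k : ℕ) :
    pathEnds k ⬝ᵥ (powVec x (k + 1) + powVec x (k + 1) ∘ Fin.rev) = 2 * (1 + x ^ k) := by
  simp only [pathEnds, add_dotProduct, single_dotProduct, Pi.add_apply, Function.comp_apply,
    powVec, Fin.rev_zero, Fin.rev_last, Fin.val_zero, Fin.val_last]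
  ring

theorem pathBlock_succ_submatrix_finSumFinEquiv (k : ℕ) :
    (pathBlock x (k + 2)).submatrix (finSumFinEquiv (n := 1)) (finSumFinEquiv (n := 1)) =
      fromBlocks (pathBlock x (k + 1)) (replicateCol (Fin 1) (Pi.single (Fin.last k) (-x)))
        (replicateRow (Fin 1) (Pi.single (Fin.last k) (-x))) (of fun _ _ => 1 + x ^ 2) := by
  ext (i | i) (j | j) <;>
    simp only [submatrix_apply, finSumFinEquiv_apply_left, finSumFinEquiv_apply_right,
      fromBlocks_apply₁₁, fromBlocks_apply₁₂, fromBlocks_apply₂₁, fromBlocks_apply₂₂,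
      replicateCol_apply, replicateRow_apply, of_apply, pathBlock_apply, Pi.single_apply,
      Fin.ext_iff, Fin.val_castAdd, Fin.val_natAdd, Fin.val_last, Fin.val_eq_zero] <;>
    split_ifs <;> first | rfl | omega

end PathBlock

/-- `I - x A + x² (D - I)` for `G_{k+2,l+2}`, with the hub (of degree 4) listed last. -/
def doubleCycleBlocks {R : Type*} [CommRing R] (x : R) (k l : ℕ) :
    Matrix ((Fin (k + 1) ⊕ Fin (l + 1)) ⊕ Fin 1) ((Fin (k + 1) ⊕ Fin (l + 1)) ⊕ Fin 1) R :=
  fromBlocks (fromBlocks (pathBlock x (k + 1)) 0 0 (pathBlock x (l + 1)))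
    (replicateCol (Fin 1) (Sum.elim (-x • pathEnds k) (-x • pathEnds l)))
    (replicateRow (Fin 1) (Sum.elim (-x • pathEnds k) (-x • pathEnds l)))
    (of fun _ _ => 1 + 3 * x ^ 2)

theorem one_sub_pow_ne_zero_of_not_isOfFinOrder {R : Type*} [Ring R] {x : R}
    (hx : ¬IsOfFinOrder x) {n : ℕ} (hn : 0 < n) : 1 - x ^ n ≠ 0 := fun h =>
  hx (isOfFinOrder_iff_pow_eq_one.2 ⟨n, hn, (sub_eq_zero.1 h).symm⟩)

theorem one_add_pow_ne_zero_of_not_isOfFinOrder {R : Type*} [CommRing R] {x : R}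
    (hx : ¬IsOfFinOrder x) {n : ℕ} (hn : 0 < n) : 1 + x ^ n ≠ 0 := fun h =>
  one_sub_pow_ne_zero_of_not_isOfFinOrder hx (by omega : 0 < 2 * n) <| by
    linear_combination (1 - x ^ n) * h

section NotRootOfUnity

variable {K : Type*} [Field K] {x : K}

theorem pathBlock_mulVec_solution_last (hx : ¬IsOfFinOrder x) (k : ℕ) :
    pathBlock x (k + 1) *ᵥ ((-x / (1 - x ^ (2 * (k + 2)))) •
      (powVec x (k + 1) ∘ Fin.rev - x ^ (k + 2) • powVec x (k + 1))) =
      Pi.single (Fin.last k) (-x) := by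
  have h := one_sub_pow_ne_zero_of_not_isOfFinOrder hx (n := 2 * (k + 2)) (by omega)
  rw [mulVec_smul, mulVec_sub, mulVec_smul, pathBlock_mulVec_powVec,
    pathBlock_mulVec_powVec_comp_rev]
  ext i
  simp only [Pi.smul_apply, Pi.sub_apply, Pi.add_apply, Pi.single_apply, smul_eq_mul]
  split_ifs <;> field_simp <;> ring

theorem det_pathBlock_mul_one_sub_sq (hx : ¬IsOfFinOrder x) :
    ∀ k, (pathBlock x k).det * (1 - x ^ 2) = 1 - x ^ (2 * (k + 1))
  | 0 => by simp
  | 1 => by rw [det_unique, pathBlock_apply, if_pos rfl]; ring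
  | k + 2 => by
    have ih := det_pathBlock_mul_one_sub_sq hx (k + 1)
    have hk := one_sub_pow_ne_zero_of_not_isOfFinOrder hx (n := 2 * (k + 2)) (by omega)
    have hdet : IsUnit (pathBlock x (k + 1)).det :=
      isUnit_iff_ne_zero.2 (left_ne_zero_of_mul (ih ▸ hk))
    rw [← det_submatrix_equiv_self (finSumFinEquiv (n := 1)),
      pathBlock_succ_submatrix_finSumFinEquiv,
      det_fromBlocks_replicateCol_replicateRow_of_mulVec_eq hdet
        (pathBlock_mulVec_solution_last hx k), single_dotProduct]
    simp only [Pi.smul_apply, Pi.sub_apply, Function.comp_apply, powVec, Fin.rev_last,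
      Fin.val_last, Fin.val_zero, smul_eq_mul]
    rw [mul_right_comm, ih]
    field_simp
    ring

theorem det_doubleCycleBlocks_mul_one_sub_sq (hx : ¬IsOfFinOrder x) (k l : ℕ) :
    (1 - x ^ 2) * (doubleCycleBlocks x k l).det =
      -3 * x ^ (2 * (k + 2 + (l + 2))) + 2 * x ^ (k + 2 + 2 * (l + 2)) +
        2 * x ^ (2 * (k + 2) + (l + 2)) + x ^ (2 * (l + 2)) + x ^ (2 * (k + 2)) -
        2 * x ^ (l + 2) - 2 * x ^ (k + 2) + 1 := by
  have hsq := one_sub_pow_ne_zero_of_not_isOfFinOrder hx two_pos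
  have hk := one_add_pow_ne_zero_of_not_isOfFinOrder hx (n := k + 2) (by omega)
  have hl := one_add_pow_ne_zero_of_not_isOfFinOrder hx (n := l + 2) (by omega)
  have hdetk := eq_div_of_mul_eq hsq (det_pathBlock_mul_one_sub_sq hx (k + 1))
  have hdetl := eq_div_of_mul_eq hsq (det_pathBlock_mul_one_sub_sq hx (l + 1))
  have hdet : IsUnit (fromBlocks (pathBlock x (k + 1)) 0 0 (pathBlock x (l + 1))).det := by
    rw [det_fromBlocks_zero₂₁, hdetk, hdetl, isUnit_iff_ne_zero]
    refine mul_ne_zero (div_ne_zero ?_ hsq) (div_ne_zero ?_ hsq) <;>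
      exact one_sub_pow_ne_zero_of_not_isOfFinOrder hx (by omega)
  have hy : fromBlocks (pathBlock x (k + 1)) 0 0 (pathBlock x (l + 1)) *ᵥ
      Sum.elim ((-x / (1 + x ^ (k + 2))) • (powVec x (k + 1) + powVec x (k + 1) ∘ Fin.rev))
        ((-x / (1 + x ^ (l + 2))) • (powVec x (l + 1) + powVec x (l + 1) ∘ Fin.rev)) =
      Sum.elim (-x • pathEnds k) (-x • pathEnds l) := by
    simp only [fromBlocks_mulVec, zero_mulVec, Sum.elim_comp_inl, Sum.elim_comp_inr, add_zero,
      zero_add, smul_zero, mulVec_smul, pathBlock_mulVec_powVec_add_comp_rev, smul_smul]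
    congr 2 <;> field_simp
  rw [doubleCycleBlocks, det_fromBlocks_replicateCol_replicateRow_of_mulVec_eq hdet hy,
    sumElim_dotProduct_sumElim, smul_dotProduct, smul_dotProduct, dotProduct_smul,
    dotProduct_smul, pathEnds_dotProduct_powVec_add_comp_rev,
    pathEnds_dotProduct_powVec_add_comp_rev, det_fromBlocks_zero₂₁, hdetk, hdetl]
  simp only [smul_eq_mul]
  field_simp
  ring

end NotRootOfUnity

namespace SimpleGraph

variable {V : Type} [Fintype V] [DecidableEq V] (G : SimpleGraph V) [DecidableRel G.Adj]

def deformedLaplacian {R : Type*} [CommRing R] (x : R) : Matrix V V R :=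
  1 - x • G.adjMatrix R + x ^ 2 • diagonal fun v => (G.degree v : R) - 1

theorem iharaZetaInv_eq_det_deformedLaplacian :
    iharaZetaInv G =
      (1 - X ^ 2) ^ (G.edgeFinset.card - Fintype.card V) * (G.deformedLaplacian (X : ℤ[X])).det :=
  rfl

theorem deformedLaplacian_apply {R : Type*} [CommRing R] (x : R) (v w : V) :
    G.deformedLaplacian x v w =
      if v = w then 1 + ((G.degree v : R) - 1) * x ^ 2 else if G.Adj v w then -x else 0 := by
  by_cases h : v = w
  · subst h
    simp [deformedLaplacian, mul_comm]
  · simp only [deformedLaplacian, Matrix.add_apply, Matrix.sub_apply, Matrix.smul_apply,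
      one_apply_ne h, diagonal_apply_ne _ h, adjMatrix_apply, if_neg h, smul_eq_mul]
    split_ifs <;> ring

theorem map_deformedLaplacian {R S : Type*} [CommRing R] [CommRing S] (f : R →+* S) (x : R) :
    (G.deformedLaplacian x).map f = G.deformedLaplacian (f x) := by
  ext v w
  simp only [map_apply, deformedLaplacian_apply]
  split_ifs <;> simp

end SimpleGraph

theorem Polynomial.not_isOfFinOrder_X {R : Type*} [Semiring R] [Nontrivial R] :
    ¬IsOfFinOrder (X : R[X]) := by
  rw [isOfFinOrder_iff_pow_eq_one]
  rintro ⟨n, hn, h⟩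
  simpa [hn.ne'] using congrArg natDegree h

section DoubleCycleGraph

variable {m n : ℕ}

theorem degree_doubleCycleGraph (hm : 3 ≤ m) (hn : 3 ≤ n) (v : Fin (m + n - 1)) :
    (doubleCycleGraph m n).degree v = if (v : ℕ) = 0 then 4 else 2 := by
  have hv := v.isLt
  rw [← SimpleGraph.card_neighborFinset_eq_degree]
  split_ifs with h0
  · have hnbrs : (doubleCycleGraph m n).neighborFinset v =
        {⟨1, by omega⟩, ⟨m - 1, by omega⟩, ⟨m, by omega⟩, ⟨m + n - 2, by omega⟩} := by
      ext u
      rw [SimpleGraph.mem_neighborFinset]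
      simp only [doubleCycleGraph, SimpleGraph.fromRel_adj, Finset.mem_insert,
        Finset.mem_singleton, ne_eq, Fin.ext_iff]
      omega
    rw [hnbrs, Finset.card_insert_of_notMem (by grind), Finset.card_insert_of_notMem (by grind),
      Finset.card_pair (by grind)]
  · rw [Finset.card_eq_two]
    refine ⟨⟨if (v : ℕ) = 1 ∨ (v : ℕ) = m then 0 else v - 1, by split_ifs <;> omega⟩,
      ⟨if (v : ℕ) = m - 1 ∨ (v : ℕ) = m + n - 2 then 0 else v + 1, by split_ifs <;> omega⟩,
      by simp only [ne_eq, Fin.mk.injEq]; split_ifs <;> grind, ?_⟩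
    ext u
    rw [SimpleGraph.mem_neighborFinset]
    simp only [doubleCycleGraph, SimpleGraph.fromRel_adj, Finset.mem_insert,
      Finset.mem_singleton, ne_eq, Fin.ext_iff]
    split_ifs <;> omega

theorem card_edgeFinset_doubleCycleGraph (hm : 3 ≤ m) (hn : 3 ≤ n) :
    (doubleCycleGraph m n).edgeFinset.card = m + n := by
  have hsum := (doubleCycleGraph m n).sum_degrees_eq_twice_card_edges
  simp only [degree_doubleCycleGraph hm hn] at hsum
  have hdeg : ∑ i ∈ Finset.range (m + n - 1), (if i = 0 then 4 else 2) = 2 * (m + n) := by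
    obtain ⟨N, hN⟩ : ∃ N, m + n - 1 = N + 1 := ⟨m + n - 2, by omega⟩
    rw [hN, Finset.sum_range_succ']
    simp only [Nat.add_one_ne_zero, if_false, if_true, Finset.sum_const, Finset.card_range,
      smul_eq_mul]
    omega
  rw [Fin.sum_univ_eq_sum_range (fun i => if i = 0 then 4 else 2), hdeg] at hsum
  omega

def doubleCycleEquiv (m n : ℕ) (hm : 2 ≤ m) (hn : 2 ≤ n) :
    (Fin (m - 2 + 1) ⊕ Fin (n - 2 + 1)) ⊕ Fin 1 ≃ Fin (m + n - 1) :=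
  (Equiv.sumComm _ _).trans <| (Equiv.sumCongr (Equiv.refl _) finSumFinEquiv).trans <|
    finSumFinEquiv.trans (finCongr (by omega))

section

variable (hm : 2 ≤ m) (hn : 2 ≤ n)

theorem val_doubleCycleEquiv_inl_inl (i : Fin (m - 2 + 1)) :
    (doubleCycleEquiv m n hm hn (.inl (.inl i)) : ℕ) = i + 1 :=
  Nat.add_comm 1 i

theorem val_doubleCycleEquiv_inl_inr (j : Fin (n - 2 + 1)) :
    (doubleCycleEquiv m n hm hn (.inl (.inr j)) : ℕ) = m + j :=
  show 1 + (m - 2 + 1 + (j : ℕ)) = m + j by omega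

theorem val_doubleCycleEquiv_inr (i : Fin 1) : (doubleCycleEquiv m n hm hn (.inr i) : ℕ) = 0 :=
  Fin.val_eq_zero i

end

theorem deformedLaplacian_doubleCycleGraph_submatrix {R : Type*} [CommRing R] (x : R)
    (hm : 3 ≤ m) (hn : 3 ≤ n) :
    ((doubleCycleGraph m n).deformedLaplacian x).submatrix
        (doubleCycleEquiv m n (by omega) (by omega)) (doubleCycleEquiv m n (by omega) (by omega)) =
      doubleCycleBlocks x (m - 2) (n - 2) := by
  ext ((i | i) | i) ((j | j) | j) <;>
    simp only [submatrix_apply, SimpleGraph.deformedLaplacian_apply,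
      degree_doubleCycleGraph hm hn] <;>
    simp only [doubleCycleGraph, SimpleGraph.fromRel_adj, ne_eq, Fin.ext_iff,
      val_doubleCycleEquiv_inl_inl, val_doubleCycleEquiv_inl_inr, val_doubleCycleEquiv_inr,
      doubleCycleBlocks, fromBlocks_apply₁₁, fromBlocks_apply₁₂, fromBlocks_apply₂₁,
      fromBlocks_apply₂₂, pathBlock_apply, Matrix.zero_apply, replicateCol_apply,
      replicateRow_apply, of_apply, Sum.elim_inl, Sum.elim_inr, Pi.smul_apply, pathEnds,
      Pi.add_apply, Pi.single_apply, Fin.val_last, Fin.val_zero, smul_eq_mul] <;>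
    (have := i.isLt; have := j.isLt
     split_ifs <;> grind)

theorem det_deformedLaplacian_doubleCycleGraph {K : Type*} [Field K] {x : K}
    (hx : ¬IsOfFinOrder x) (hm : 3 ≤ m) (hn : 3 ≤ n) :
    (1 - x ^ 2) * ((doubleCycleGraph m n).deformedLaplacian x).det =
      -3 * x ^ (2 * (m + n)) + 2 * x ^ (m + 2 * n) + 2 * x ^ (2 * m + n) +
        x ^ (2 * n) + x ^ (2 * m) - 2 * x ^ n - 2 * x ^ m + 1 := by
  rw [← det_submatrix_equiv_self (doubleCycleEquiv m n (by omega) (by omega)),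
    deformedLaplacian_doubleCycleGraph_submatrix x hm hn,
    det_doubleCycleBlocks_mul_one_sub_sq hx, Nat.sub_add_cancel (by omega : 2 ≤ m),
    Nat.sub_add_cancel (by omega : 2 ≤ n)]

end DoubleCycleGraph

/-- For `3 ≤ m ≤ n`, the Ihara zeta function of the double cycle graph `G_{m,n}`. -/
theorem iharaZetaInv_doubleCycleGraph (m n : ℕ) (hm : 3 ≤ m) (hmn : m ≤ n) :
    iharaZetaInv (doubleCycleGraph m n) =
      -3 * X ^ (2 * (m + n)) + 2 * X ^ (m + 2 * n) + 2 * X ^ (2 * m + n) +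
        X ^ (2 * n) + X ^ (2 * m) - 2 * X ^ n - 2 * X ^ m + 1 := by
  have hn : 3 ≤ n := hm.trans hmn
  let φ := algebraMap ℤ[X] (FractionRing ℤ[X])
  have hφ : Function.Injective φ := IsFractionRing.injective _ _
  have hX : ¬IsOfFinOrder (φ X) :=
    (hφ.isOfFinOrder_iff (f := φ.toMonoidHom)).not.2 Polynomial.not_isOfFinOrder_X
  apply hφ
  rw [SimpleGraph.iharaZetaInv_eq_det_deformedLaplacian, card_edgeFinset_doubleCycleGraph hm hn,
    Fintype.card_fin, show m + n - (m + n - 1) = 1 by omega, pow_one, map_mul, RingHom.map_det,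
    RingHom.mapMatrix_apply, SimpleGraph.map_deformedLaplacian]
  simpa [map_ofNat] using det_deformedLaplacian_doubleCycleGraph hX hm hn
end

section
/- For every integer n ≥ 3, the complete graph K_n satisfies ζ_{K_n}(u)^{-1} = (1 − u²)^{n(n−3)/2} · (1 + u + (n−2)u²)^{n−1} · (1 + (1−n)u + (n−2)u²) in ℤ[u]. -/
open Polynomial Matrix

/-- Determinant of `a • 1 + b • J` over a field, for `a ≠ 0`. -/
lemma det_smul_one_add_smul_allOnes {K : Type*} [Field K] (n : ℕ) (hn : 1 ≤ n) (a b : K)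
    (ha : a ≠ 0) :
    ((a • (1 : Matrix (Fin n) (Fin n) K) + b • Matrix.of fun _ _ => (1 : K))).det =
      a ^ (n - 1) * (a + n * b) := by
  have key : (a • (1 : Matrix (Fin n) (Fin n) K) + b • Matrix.of fun _ _ => (1 : K)) =
      a • ((1 : Matrix (Fin n) (Fin n) K) +
        Matrix.replicateCol Unit (fun _ => b / a) * Matrix.replicateRow Unit (fun _ => (1 : K))) := by
    ext i j
    simp [Matrix.mul_apply, Matrix.one_apply, div_mul_eq_mul_div, mul_add,
      mul_div_cancel₀ _ ha]
  rw [key, Matrix.det_smul, Matrix.det_one_add_replicateCol_mul_replicateRow]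
  have : dotProduct (fun _ : Fin n => (1 : K)) (fun _ => b / a) = (n : K) * (b / a) := by
    simp [dotProduct]
  rw [this]
  obtain ⟨m, rfl⟩ := Nat.exists_eq_add_of_le hn
  have h1 : 1 + m - 1 = m := by omega
  rw [h1, Fintype.card_fin, add_comm 1 m, pow_succ]
  field_simp

lemma matrix_eq (n : ℕ) (hn : 3 ≤ n) :
    ((1 : Matrix (Fin n) (Fin n) (Polynomial ℤ)) -
        (X : Polynomial ℤ) • (⊤ : SimpleGraph (Fin n)).adjMatrix (Polynomial ℤ) +
        (X ^ 2 : Polynomial ℤ) • Matrix.diagonal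
          (fun v => ((⊤ : SimpleGraph (Fin n)).degree v : Polynomial ℤ) - 1) :
          Matrix (Fin n) (Fin n) (Polynomial ℤ)) =
      ((1 + X + C ((n : ℤ) - 2) * X ^ 2 : Polynomial ℤ)) • (1 : Matrix (Fin n) (Fin n) (Polynomial ℤ)) +
        ((-X : Polynomial ℤ)) • (Matrix.of fun _ _ => (1 : Polynomial ℤ) : Matrix (Fin n) (Fin n) _) := by
  refine Matrix.ext fun i j => ?_
  have hC : (C ((n : ℤ) - 2) : Polynomial ℤ) = (n : Polynomial ℤ) - 2 := by
    rw [map_sub, Polynomial.C_eq_natCast, map_ofNat]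
  have hcast : ((n - 1 : ℕ) : Polynomial ℤ) = (n : Polynomial ℤ) - 1 := by
    rw [Nat.cast_sub (by omega : 1 ≤ n), Nat.cast_one]
  by_cases h : i = j
  · subst h
    simp [Matrix.one_apply, hcast, hC]
    ring
  · simp [Matrix.one_apply, h, hC, SimpleGraph.top_adj]

/-- For `n ≥ 3`, the Ihara zeta function of the complete graph `K_n` satisfies
`ζ_{K_n}(u)⁻¹ = (1-u²)^{n(n-3)/2} (1 + u + (n-2)u²)^{n-1} (1 + (1-n)u + (n-2)u²)`. -/
theorem iharaZetaInv_completeGraph (n : ℕ) (hn : 3 ≤ n) :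
    iharaZetaInv (⊤ : SimpleGraph (Fin n)) =
      (1 - X ^ 2) ^ (n * (n - 3) / 2) *
        (1 + X + C ((n : ℤ) - 2) * X ^ 2) ^ (n - 1) *
        (1 + C (1 - (n : ℤ)) * X + C ((n : ℤ) - 2) * X ^ 2) := by
  have hcard : (⊤ : SimpleGraph (Fin n)).edgeFinset.card - Fintype.card (Fin n)
      = n * (n - 3) / 2 := by
    rw [SimpleGraph.card_edgeFinset_top_eq_card_choose_two, Fintype.card_fin,
      Nat.choose_two_right]
    obtain ⟨m, rfl⟩ : ∃ m, n = m + 3 := ⟨n - 3, by omega⟩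
    obtain ⟨k, hk⟩ := Nat.even_mul_succ_self m
    have h1 : (m + 3) * (m + 3 - 1) = (k + k) + 4 * m + 6 := by
      rw [show m + 3 - 1 = m + 2 from rfl]; nlinarith [hk]
    have h2 : (m + 3) * (m + 3 - 3) = (k + k) + 2 * m := by
      rw [show m + 3 - 3 = m from rfl]; nlinarith [hk]
    omega
  set A : Polynomial ℤ := 1 + X + C ((n : ℤ) - 2) * X ^ 2 with hA
  set B : Polynomial ℤ := 1 + C (1 - (n : ℤ)) * X + C ((n : ℤ) - 2) * X ^ 2 with hB
  have hdet : ((1 : Matrix (Fin n) (Fin n) (Polynomial ℤ)) -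
        (X : Polynomial ℤ) • (⊤ : SimpleGraph (Fin n)).adjMatrix (Polynomial ℤ) +
        (X ^ 2 : Polynomial ℤ) • Matrix.diagonal
          (fun v => ((⊤ : SimpleGraph (Fin n)).degree v : Polynomial ℤ) - 1)).det
      = A ^ (n - 1) * B := by
    rw [matrix_eq n hn]
    set K := FractionRing (Polynomial ℤ)
    have hinj : Function.Injective (algebraMap (Polynomial ℤ) K) :=
      IsFractionRing.injective _ _
    apply hinj
    set f := algebraMap (Polynomial ℤ) K
    rw [RingHom.map_det, RingHom.mapMatrix_apply, ← hA]
    have hmap : (A • (1 : Matrix (Fin n) (Fin n) (Polynomial ℤ)) +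
        ((-X : Polynomial ℤ)) • (Matrix.of fun _ _ => (1 : Polynomial ℤ) : Matrix (Fin n) (Fin n) _)).map f
        = (f A) • (1 : Matrix (Fin n) (Fin n) K) + (f (-X)) • Matrix.of fun _ _ => (1 : K) := by
      ext i j
      by_cases h : i = j <;> simp [Matrix.one_apply, h]
    rw [hmap, det_smul_one_add_smul_allOnes n (by omega) _ _]
    · have hAB : A + (n : Polynomial ℤ) * (-X) = B := by
        rw [hA, hB]
        simp only [map_sub, Polynomial.C_1, map_ofNat, Polynomial.C_eq_natCast]
        ring
      rw [map_mul f (A ^ (n - 1)) B, map_pow f A (n - 1)]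
      congr 1
      rw [← map_natCast f n, ← f.map_mul, ← f.map_add, hAB]
    · intro h
      have : A = 0 := hinj (by simpa using h)
      have hcoeff : A.coeff 0 = 1 := by
        rw [hA]; simp [coeff_one, coeff_X]
      rw [this] at hcoeff
      simp at hcoeff
  rw [iharaZetaInv, hcard, hdet, mul_assoc]
end

section
/- Let G be a finite connected simple graph with minimum degree at least 2, let r = |E| − |V| + 1 ≥ 1 be its rank, and let κ_G be its number of spanning trees. Then the r-th derivative of the polynomial ζ_G(u)^{-1}, evaluated at u = 1, equals (−1)^{r−1} · 2^r · r! · (r−1) · κ_G. -/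
open Polynomial Matrix

/-- The number of spanning trees of `G`: the number of subsets `E'` of the edge set such that
the graph on all of `V` with edge set `E'` is connected and acyclic (a tree). -/
noncomputable def spanningTreeCount {V : Type} [Fintype V] [DecidableEq V]
    (G : SimpleGraph V) [DecidableRel G.Adj] : ℕ :=
  Set.ncard {E' : Finset (Sym2 V) |
    E' ⊆ G.edgeFinset ∧ (SimpleGraph.fromEdgeSet (E' : Set (Sym2 V))).IsTree}

/-!
At `u = 1` the matrix `I - A u + Q u²` becomes the Laplacian `L = D - A`, so
`ζ_G(u)⁻¹ = (u - 1)^(r-1) (-(u + 1))^(r-1) h(u)` with `h = det (I - A u + Q u²)` and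
`h(1) = det L = 0`; hence the `r`-th derivative at `1` is `r! (-2)^(r-1) h'(1)`. By Jacobi's formula
`h'(1)` is the sum over `v` of `det L` with column `v` replaced by the derivative column, which is
the column of `L` plus `(deg v - 2)` times a unit vector. By linearity in that column and
`det L = 0`, the term of `v` is `(deg v - 2)` times a diagonal cofactor of `L`, which is `κ_G` by
the matrix-tree theorem; summing, `h'(1) = (2|E| - 2|V|) κ_G = 2 (r - 1) κ_G`.

The matrix-tree theorem follows from `L = N Nᵀ` for an oriented incidence matrix `N` and the
Cauchy–Binet formula. A square minor of `N` with the row of a vertex `i` removed is a unit when its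
edges form a spanning tree (its inverse records the flows along the tree paths to `i`), and is
singular otherwise: then the edges do not connect the graph, and the indicator of a component
missing `i` is a left null vector.
-/

namespace Matrix

variable {m n R : Type*} [Fintype m] [Fintype n] [DecidableEq m] [DecidableEq n] [CommRing R]

theorem det_mul_eq_sum_injective (A : Matrix m n R) (B : Matrix n m R) :
    (A * B).det = ∑ f : m → n with Function.Injective f,
      (∏ i, A i (f i)) * (B.submatrix f id).det := by
  have hrows : A * B = of fun i => ∑ k, A i k • B k := by
    ext i j
    simp [mul_apply, Finset.sum_apply]
  have hexpand : (A * B).det = ∑ f : m → n, (∏ i, A i (f i)) * (B.submatrix f id).det := by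
    rw [hrows]
    exact (detRowAlternating.map_sum _).trans
      (Finset.sum_congr rfl fun f _ => detRowAlternating.map_smul_univ _ _)
  rw [hexpand, Finset.sum_filter, Finset.sum_congr rfl]
  intro f _
  split_ifs with hf
  · rfl
  · obtain ⟨i, j, hij, hne⟩ := Function.not_injective_iff.mp hf
    rw [det_zero_of_row_eq hne (by ext k; simp [hij]), mul_zero]

theorem det_mul_eq_sum_det_mul_submatrix (A : Matrix m n R) (B : Matrix n m R) :
    (A * B).det = ∑ T ∈ (Finset.univ : Finset n).powersetCard (Fintype.card m),
      (A.submatrix id (fun x : T => (x : n)) * B.submatrix (fun x : T => (x : n)) id).det := by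
  rw [det_mul_eq_sum_injective, ← Finset.sum_fiberwise_of_maps_to
    (g := fun f : m → n => Finset.univ.image f)
    (t := (Finset.univ : Finset n).powersetCard (Fintype.card m)) fun f hf => ?_]
  swap
  · rw [Finset.mem_powersetCard, Finset.card_image_of_injective _ (Finset.mem_filter.mp hf).2]
    exact ⟨Finset.subset_univ _, Finset.card_univ⟩
  refine Finset.sum_congr rfl fun T hT => ?_
  have hcard : Fintype.card m = Fintype.card T := by
    rw [Fintype.card_coe, (Finset.mem_powersetCard.mp hT).2]
  rw [det_mul_eq_sum_injective, Finset.filter_filter]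
  refine Finset.sum_bij' (fun f hf x => ⟨f x, ?_⟩) (fun g _ x => g x) ?_ ?_ ?_ ?_ ?_
  · exact (Finset.mem_filter.mp hf).2.2 ▸ Finset.mem_image_of_mem f (Finset.mem_univ x)
  · intro f hf
    simp only [Finset.mem_filter, Finset.mem_univ, true_and] at hf ⊢
    exact fun x y hxy => hf.1 (congrArg Subtype.val hxy)
  · intro g hg
    simp only [Finset.mem_filter, Finset.mem_univ, true_and] at hg ⊢
    have hinj : Function.Injective fun x => (g x : n) := Subtype.val_injective.comp hg
    refine ⟨hinj, Finset.eq_of_subset_of_card_le ?_ ?_⟩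
    · intro y hy
      obtain ⟨x, -, rfl⟩ := Finset.mem_image.mp hy
      exact (g x).2
    · rw [Finset.card_image_of_injective _ hinj, Finset.card_univ, hcard, Fintype.card_coe]
  · exact fun _ _ => rfl
  · exact fun _ _ => rfl
  · exact fun _ _ => rfl

theorem det_updateCol_single_one (M : Matrix n n R) (i : n) :
    (M.updateCol i (Pi.single i 1)).det = (M.submatrix ((↑) : {j // j ≠ i} → n) (↑)).det := by
  let e := Equiv.sumCompl (· = i)
  have hblocks : (M.updateCol i (Pi.single i 1)).submatrix e e =
      fromBlocks 1 (of fun _ (b : {j // j ≠ i}) => M i b) 0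
        (M.submatrix ((↑) : {j // j ≠ i} → n) ((↑) : {j // j ≠ i} → n)) := by
    ext (a | a) (b | b)
    · simp [e, b.2, Subsingleton.elim a b]
    · simp [e, a.2, b.2]
    · simp [e, a.2, b.2]
    · simp [e, b.2]
  rw [← det_submatrix_equiv_self e, hblocks, det_fromBlocks_zero₂₁, det_one, one_mul]

end Matrix

namespace Polynomial

variable {R : Type*} [CommRing R]

open Nat in
theorem eval_iterate_derivative_X_sub_C_pow_mul (a : R) (n : ℕ) (p : R[X]) :
    (derivative^[n] ((X - C a) ^ n * p)).eval a = n ! * p.eval a := by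
  rw [iterate_derivative_mul, eval_finsetSum,
    Finset.sum_eq_single_of_mem 0 (Finset.mem_range.mpr n.succ_pos)]
  · simp [iterate_derivative_X_sub_pow_self]
  · intro k hk hk0
    rw [iterate_derivative_X_sub_pow, Nat.sub_sub_self (Finset.mem_range_succ_iff.mp hk)]
    simp [zero_pow hk0]

open Nat in
theorem eval_iterate_derivative_X_sub_C_pow_mul_of_isRoot {a : R} {p : R[X]} (hp : p.IsRoot a)
    (n : ℕ) (q : R[X]) :
    (derivative^[n + 1] ((X - C a) ^ n * q * p)).eval a =
      (n + 1)! * q.eval a * (derivative p).eval a := by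
  obtain ⟨p₁, rfl⟩ := dvd_iff_isRoot.mpr hp
  rw [show (X - C a) ^ n * q * ((X - C a) * p₁) = (X - C a) ^ (n + 1) * (q * p₁) by ring,
    eval_iterate_derivative_X_sub_C_pow_mul]
  simp [mul_assoc]

variable {n : Type*} [Fintype n] [DecidableEq n]

theorem eval_det_eq_det_map (M : Matrix n n R[X]) (a : R) : M.det.eval a = (M.map (eval a)).det :=
  RingHom.map_det (evalRingHom a) M

theorem derivative_det (M : Matrix n n R[X]) :
    derivative M.det = ∑ j, (M.updateCol j fun k => derivative (M k j)).det := by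
  simp only [Matrix.det_apply', map_sum, derivative_intCast_mul, derivative_prod_finset,
    Finset.mul_sum]
  rw [Finset.sum_comm]
  refine Finset.sum_congr rfl fun j _ => Finset.sum_congr rfl fun σ _ => ?_
  rw [← Finset.mul_prod_erase _ _ (Finset.mem_univ j), Matrix.updateCol_self,
    Finset.prod_congr rfl fun i hi => Matrix.updateCol_ne (Finset.ne_of_mem_erase hi)]
  ring

end Polynomial

namespace Sym2

variable {V : Type*} [DecidableEq V]

/-- The entry of the oriented incidence matrix for the orientation `e.out.1 → e.out.2` chosen by
`Quot.out`; it vanishes on loops. -/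
noncomputable def incSign (v : V) (e : Sym2 V) : ℤ :=
  (if v = e.out.1 then 1 else 0) - (if v = e.out.2 then 1 else 0)

theorem incSign_mul_incSign_mk (u v x y : V) :
    incSign u s(x, y) * incSign v s(x, y) =
      ((if u = x then 1 else 0) - (if u = y then 1 else 0)) *
        ((if v = x then 1 else 0) - (if v = y then 1 else 0)) := by
  have hout : s(s(x, y).out.1, s(x, y).out.2) = s(x, y) := Quot.out_eq _
  rcases (mk_eq_mk_iff (p := s(x, y).out) (q := (x, y))).mp hout with h | h
  · simp only [incSign, h]
  · simp only [incSign, h, Prod.swap]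
    ring

theorem sum_mul_incSign [Fintype V] (f : V → ℤ) (e : Sym2 V) :
    ∑ v, f v * incSign v e = f e.out.1 - f e.out.2 := by
  simp [incSign, mul_sub, Finset.sum_sub_distrib]

end Sym2

namespace SimpleGraph

theorem isTree_fromEdgeSet_of_connected {V : Type*} [Fintype V] {T : Finset (Sym2 V)}
    (hc : (fromEdgeSet (T : Set (Sym2 V))).Connected) (hT : T.card + 1 ≤ Fintype.card V) :
    (fromEdgeSet (T : Set (Sym2 V))).IsTree := by
  refine isTree_iff_connected_and_card.mpr ⟨hc, le_antisymm ?_ hc.card_vert_le_card_edgeSet_add_one⟩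
  have hsub : (fromEdgeSet (T : Set (Sym2 V))).edgeSet ⊆ T := by
    simp only [edgeSet_fromEdgeSet, Set.sdiff_subset]
  rw [Nat.card_coe_set_eq, Nat.card_eq_fintype_card]
  calc _ ≤ (T : Set (Sym2 V)).ncard + 1 := by gcongr; exact T.finite_toSet
    _ ≤ _ := by rwa [Set.ncard_coe_finset]

theorem card_add_one_of_isTree_fromEdgeSet {V : Type*} [Fintype V] (G : SimpleGraph V)
    [DecidableRel G.Adj] {T : Finset (Sym2 V)} (hT : T ⊆ G.edgeFinset)
    (htree : (fromEdgeSet (T : Set (Sym2 V))).IsTree) : T.card + 1 = Fintype.card V := by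
  have hedges : (fromEdgeSet (T : Set (Sym2 V))).edgeSet = T := by
    refine (edgeSet_fromEdgeSet _).trans (sdiff_eq_left.mpr ?_)
    exact Set.disjoint_left.mpr fun e he =>
      G.not_isDiag_of_mem_edgeSet (mem_edgeFinset.mp (hT he))
  have := (isTree_iff_connected_and_card.mp htree).2
  rwa [Nat.card_coe_set_eq, hedges, Set.ncard_coe_finset, Nat.card_eq_fintype_card] at this

section EdgeSetMinors

variable {V : Type*} [DecidableEq V] {G : SimpleGraph V}

noncomputable def Walk.flow {a b : V} (p : G.Walk a b) (e : Sym2 V) : ℤ :=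
  (p.darts.map fun d => if d.edge = e then Sym2.incSign d.fst e else 0).sum

theorem Walk.flow_eq_zero_of_notMem_edgeSet {a b : V} (p : G.Walk a b) {e : Sym2 V}
    (he : e ∉ G.edgeSet) : p.flow e = 0 :=
  List.sum_eq_zero fun x hx => by
    obtain ⟨d, hd, rfl⟩ := List.mem_map.mp hx
    rw [if_neg]
    rintro rfl
    exact he d.edge_mem

theorem Walk.sum_incSign_mul_flow [Fintype V] {a b : V} (p : G.Walk a b) (w : V) :
    ∑ e, Sym2.incSign w e * p.flow e = (if w = a then 1 else 0) - (if w = b then 1 else 0) := by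
  induction p with
  | nil => simp [flow]
  | @cons x y z hxy q ih =>
    have hstep : ∀ e, (cons hxy q).flow e =
        (if s(x, y) = e then Sym2.incSign x e else 0) + q.flow e := fun e => by
      simp only [flow, darts_cons, List.map_cons, List.sum_cons]
      rfl
    simp only [hstep, mul_add, Finset.sum_add_distrib, ih, mul_ite, mul_zero,
      Finset.sum_ite_eq, Finset.mem_univ, if_true, Sym2.incSign_mul_incSign_mk]
    simp [hxy.ne]

variable [Fintype V] (i : V) {T : Finset (Sym2 V)} (e : {v // v ≠ i} ≃ T)

noncomputable def incSignMinor : Matrix {v // v ≠ i} {v // v ≠ i} ℤ :=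
  of fun v t => Sym2.incSign (v : V) (e t)

theorem isUnit_det_incSignMinor_of_isTree (hT : (fromEdgeSet (T : Set (Sym2 V))).IsTree) :
    IsUnit (incSignMinor i e).det := by
  set G' := fromEdgeSet (T : Set (Sym2 V))
  let path (w : V) : G'.Walk w i := (hT.connected.preconnected w i).some
  refine isUnit_det_of_right_inverse (B := of fun t (w : {v // v ≠ i}) => (path w).flow (e t)) ?_
  ext v w
  have hflow : ∀ x ∉ T, Sym2.incSign (v : V) x * (path w).flow x = 0 := fun x hx => by
    rw [(path w).flow_eq_zero_of_notMem_edgeSet fun h => hx (edgeSet_fromEdgeSet _ ▸ h).1,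
      mul_zero]
  calc (incSignMinor i e * of fun t (w : {v // v ≠ i}) => (path w).flow (e t)) v w
      = ∑ x ∈ T, Sym2.incSign (v : V) x * (path w).flow x := by
        simp only [incSignMinor, mul_apply, of_apply]
        exact (e.sum_comp fun x : T => Sym2.incSign (v : V) x * (path w).flow x).trans
          (T.sum_coe_sort fun x => Sym2.incSign (v : V) x * (path w).flow x)
    _ = ∑ x, Sym2.incSign (v : V) x * (path w).flow x :=
        Finset.sum_subset (Finset.subset_univ T) fun x _ hx => hflow x hx
    _ = (1 : Matrix {v // v ≠ i} {v // v ≠ i} ℤ) v w := by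
        rw [Walk.sum_incSign_mul_flow, if_neg v.2, sub_zero, one_apply]
        exact if_congr Subtype.ext_iff.symm rfl rfl

theorem det_incSignMinor_eq_zero_of_not_connected
    (hT : ¬ (fromEdgeSet (T : Set (Sym2 V))).Connected) :
    (incSignMinor i e).det = 0 := by
  set G' := fromEdgeSet (T : Set (Sym2 V))
  obtain ⟨u, hu⟩ : ∃ u, ¬ G'.Reachable i u := by
    have : Nonempty V := ⟨i⟩
    by_contra! h
    exact hT ⟨fun u w => (h u).symm.trans (h w)⟩
  have hui : u ≠ i := by rintro rfl; exact hu .rfl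
  let y (w : V) : ℤ := if G'.Reachable u w then 1 else 0
  have hyi : y i = 0 := if_neg fun h => hu h.symm
  refine exists_vecMul_eq_zero_iff.mp ⟨fun w => y w, fun h => ?_, ?_⟩
  · simpa [y] using congrFun h ⟨u, hui⟩
  ext t
  have hends : y (e t : Sym2 V).out.1 = y (e t : Sym2 V).out.2 := by
    by_cases hd : (e t : Sym2 V).out.1 = (e t : Sym2 V).out.2
    · rw [hd]
    have hadj : G'.Adj (e t : Sym2 V).out.1 (e t : Sym2 V).out.2 :=
      (fromEdgeSet_adj _).mpr ⟨by rw [Sym2.mk, Quot.out_eq]; exact (e t).2, hd⟩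
    have hiff : G'.Reachable u (e t : Sym2 V).out.1 ↔ G'.Reachable u (e t : Sym2 V).out.2 :=
      ⟨fun h => h.trans hadj.reachable, fun h => h.trans hadj.symm.reachable⟩
    simp only [y, hiff]
  calc ((fun w : {v // v ≠ i} => y w) ᵥ* incSignMinor i e) t
      = ∑ w ∈ Finset.univ.erase i, y w * Sym2.incSign w (e t) := by
        simp only [incSignMinor, vecMul, dotProduct, of_apply]
        exact (Finset.sum_subtype _ (by simp) (fun w => y w * Sym2.incSign w (e t))).symm
    _ = 0 := by
        rw [Finset.sum_erase _ (by rw [hyi, zero_mul]), Sym2.sum_mul_incSign, hends, sub_self]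

open scoped Classical in
theorem det_incSignMinor_sq :
    (incSignMinor i e).det ^ 2 =
      if (fromEdgeSet (T : Set (Sym2 V))).IsTree then 1 else 0 := by
  split_ifs with hT
  · rcases Int.isUnit_iff.mp (isUnit_det_incSignMinor_of_isTree i e hT) with h | h <;> simp [h]
  · have hcard : T.card + 1 ≤ Fintype.card V := by
      have hcard := Fintype.card_congr e
      rw [Fintype.card_coe, Fintype.card_subtype_compl, Fintype.card_subtype_eq] at hcard
      have := Fintype.card_pos_iff.mpr ⟨i⟩
      omega
    rw [det_incSignMinor_eq_zero_of_not_connected i e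
      fun hc => hT (isTree_fromEdgeSet_of_connected hc hcard), zero_pow two_ne_zero]

end EdgeSetMinors

variable {V : Type} [Fintype V] [DecidableEq V] (G : SimpleGraph V) [DecidableRel G.Adj]

noncomputable def signedIncMatrix : Matrix V (Sym2 V) ℤ :=
  of fun v e => if e ∈ G.edgeFinset then Sym2.incSign v e else 0

theorem incSign_mul_incSign_of_mem_edgeFinset {e : Sym2 V} (he : e ∈ G.edgeFinset) (u v : V) :
    Sym2.incSign u e * Sym2.incSign v e =
      if u = v then (if u ∈ e then 1 else 0) else (if e = s(u, v) then -1 else 0) := by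
  induction e using Sym2.ind with
  | _ x y =>
    have hxy : x ≠ y := G.ne_of_adj (mem_edgeFinset.mp he)
    simp only [Sym2.incSign_mul_incSign_mk, Sym2.mem_iff, Sym2.eq_iff]
    split_ifs <;> grind

theorem lapMatrix_eq_signedIncMatrix_mul_transpose :
    G.lapMatrix ℤ = G.signedIncMatrix * G.signedIncMatrixᵀ := by
  ext u v
  have hsum : (G.signedIncMatrix * G.signedIncMatrixᵀ) u v =
      ∑ e ∈ G.edgeFinset, Sym2.incSign u e * Sym2.incSign v e := by
    simp only [mul_apply, transpose_apply, signedIncMatrix, of_apply, ite_mul_ite, mul_zero]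
    rw [← Finset.sum_filter, Finset.filter_mem_eq_inter, Finset.univ_inter]
  rw [hsum, Finset.sum_congr rfl fun e he => G.incSign_mul_incSign_of_mem_edgeFinset he u v]
  by_cases huv : u = v
  · subst huv
    simp [lapMatrix, degMatrix, ← card_incidenceFinset_eq_degree, incidenceFinset_eq_filter]
  · simp [lapMatrix, degMatrix, huv, adjMatrix_apply, apply_ite Neg.neg]

open scoped Classical in
theorem spanningTreeCount_eq_card_filter :
    spanningTreeCount G = ((Finset.univ.powersetCard (Fintype.card V - 1)).filter fun T =>
      T ⊆ G.edgeFinset ∧ (fromEdgeSet (T : Set (Sym2 V))).IsTree).card := by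
  rw [spanningTreeCount, ← Set.ncard_coe_finset]
  congr 1
  ext T
  simp only [Set.mem_ofPred_eq, Finset.coe_filter, Finset.mem_powersetCard, Finset.subset_univ,
    true_and]
  refine ⟨fun h => ⟨?_, h⟩, fun h => h.2⟩
  have := G.card_add_one_of_isTree_fromEdgeSet h.1 h.2
  omega

open scoped Classical in
theorem det_signedIncMatrix_submatrix_sq (i : V) (T : Finset (Sym2 V)) (e : {v // v ≠ i} ≃ T) :
    (G.signedIncMatrix.submatrix ((↑) : {v // v ≠ i} → V) fun t => (e t : Sym2 V)).det ^ 2 =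
      if T ⊆ G.edgeFinset ∧ (fromEdgeSet (T : Set (Sym2 V))).IsTree then 1 else 0 := by
  by_cases hT : T ⊆ G.edgeFinset
  · have hC : (G.signedIncMatrix.submatrix ((↑) : {v // v ≠ i} → V) fun t => (e t : Sym2 V)) =
        incSignMinor i e := by
      ext v t
      simp [signedIncMatrix, incSignMinor, mem_edgeFinset.mp (hT (e t).2)]
    rw [hC, det_incSignMinor_sq, if_congr (and_iff_right hT).symm rfl rfl]
  · obtain ⟨x, hxT, hxE⟩ := Finset.not_subset.mp hT
    rw [if_neg (fun h => hT h.1), det_eq_zero_of_column_eq_zero (e.symm ⟨x, hxT⟩) fun v => by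
      simp [signedIncMatrix, mem_edgeFinset.not.mp hxE], zero_pow two_ne_zero]

theorem det_lapMatrix_submatrix_eq_spanningTreeCount (i : V) :
    ((G.lapMatrix ℤ).submatrix ((↑) : {v // v ≠ i} → V) (↑)).det = spanningTreeCount G := by
  classical
  set N := G.signedIncMatrix.submatrix ((↑) : {v // v ≠ i} → V) id
  have hL : (G.lapMatrix ℤ).submatrix ((↑) : {v // v ≠ i} → V) (↑) = N * Nᵀ := by
    rw [lapMatrix_eq_signedIncMatrix_mul_transpose, submatrix_mul _ _ _ id _ Function.bijective_id,
      transpose_submatrix]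
  have hcard : Fintype.card {v // v ≠ i} = Fintype.card V - 1 := by
    rw [Fintype.card_subtype_compl, Fintype.card_subtype_eq]
  rw [hL, det_mul_eq_sum_det_mul_submatrix, spanningTreeCount_eq_card_filter, Finset.card_filter,
    Nat.cast_sum, hcard]
  refine Finset.sum_congr rfl fun T hT => ?_
  have e : {v // v ≠ i} ≃ T := Fintype.equivOfCardEq <| by
    rw [Fintype.card_coe, (Finset.mem_powersetCard.mp hT).2, hcard]
  rw [← submatrix_id_id (_ * _), ← submatrix_mul_equiv _ _ id e id, det_mul,
    ← transpose_submatrix, ← transpose_submatrix, det_transpose, ← sq]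
  push_cast
  exact G.det_signedIncMatrix_submatrix_sq i T e

noncomputable def iharaMatrix : Matrix V V ℤ[X] :=
  1 - (X : ℤ[X]) • G.adjMatrix ℤ[X] + (X ^ 2 : ℤ[X]) • diagonal fun v => (G.degree v : ℤ[X]) - 1

theorem iharaZetaInv_eq : iharaZetaInv G =
    (1 - X ^ 2) ^ (G.edgeFinset.card - Fintype.card V) * G.iharaMatrix.det := rfl

theorem iharaMatrix_map_eval_one : G.iharaMatrix.map (eval 1) = G.lapMatrix ℤ := by
  ext u v
  by_cases huv : u = v
  · subst huv
    simp [iharaMatrix, lapMatrix, degMatrix]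
  · simp [iharaMatrix, lapMatrix, degMatrix, huv, adjMatrix_apply, apply_ite (eval (1 : ℤ))]

theorem eval_one_derivative_iharaMatrix (j : V) :
    (fun k => (derivative (G.iharaMatrix k j)).eval 1) =
      (fun k => G.lapMatrix ℤ k j) + ((G.degree j : ℤ) - 2) • Pi.single j 1 := by
  ext k
  by_cases hkj : k = j
  · subst hkj
    simp [iharaMatrix, lapMatrix, degMatrix]
    ring
  · simp [iharaMatrix, lapMatrix, degMatrix, hkj, adjMatrix_apply, apply_ite (eval (1 : ℤ)),
      apply_ite derivative]

theorem det_lapMatrix_eq_zero_of_isDomain {R : Type*} [CommRing R] [IsDomain R] [Nonempty V] :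
    (G.lapMatrix R).det = 0 :=
  exists_mulVec_eq_zero_iff.mp ⟨fun _ => 1,
    fun h => one_ne_zero (congrFun h (Classical.arbitrary V)), G.lapMatrix_mulVec_const_eq_zero⟩

theorem eval_one_derivative_det_iharaMatrix [Nonempty V] :
    (derivative G.iharaMatrix.det).eval 1 =
      2 * ((G.edgeFinset.card : ℤ) - Fintype.card V) * spanningTreeCount G := by
  have hcol (j : V) : ((G.iharaMatrix.updateCol j fun k => derivative (G.iharaMatrix k j)).map
      (eval 1)).det = ((G.degree j : ℤ) - 2) * spanningTreeCount G := by
    rw [map_updateCol, iharaMatrix_map_eval_one, Function.comp_def,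
      eval_one_derivative_iharaMatrix, det_updateCol_add, updateCol_eq_self,
      det_lapMatrix_eq_zero_of_isDomain, zero_add, det_updateCol_smul, det_updateCol_single_one,
      det_lapMatrix_submatrix_eq_spanningTreeCount]
  have hdeg : ∑ j, (G.degree j : ℤ) = 2 * G.edgeFinset.card := by
    exact_mod_cast G.sum_degrees_eq_twice_card_edges
  simp only [derivative_det, eval_finsetSum, eval_det_eq_det_map, hcol, ← Finset.sum_mul,
    Finset.sum_sub_distrib, hdeg, Finset.sum_const, Finset.card_univ, nsmul_eq_mul]
  ring

end SimpleGraph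

theorem iterated_deriv_iharaZetaInv_eval_one_general {V : Type} [Fintype V] [DecidableEq V]
    (G : SimpleGraph V) [DecidableRel G.Adj]
    (hconn : G.Connected)
    (hVE : Fintype.card V ≤ G.edgeFinset.card)
    (r : ℕ) (hr : r = G.edgeFinset.card - Fintype.card V + 1) :
    (derivative^[r] (iharaZetaInv G)).eval 1 =
      (-1 : ℤ) ^ (r - 1) * 2 ^ r * (Nat.factorial r : ℤ) * ((r : ℤ) - 1) *
        (spanningTreeCount G : ℤ) := by
  have : Nonempty V := hconn.nonempty
  obtain ⟨k, hk⟩ : ∃ k, G.edgeFinset.card = Fintype.card V + k := Nat.exists_eq_add_of_le hVE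
  have hfactor : iharaZetaInv G = (X - C 1) ^ k * (-(X + 1)) ^ k * G.iharaMatrix.det := by
    rw [G.iharaZetaInv_eq, hk, Nat.add_sub_cancel_left, ← mul_pow, C_1]
    ring
  have hroot : G.iharaMatrix.det.IsRoot 1 := by
    rw [IsRoot, eval_det_eq_det_map, G.iharaMatrix_map_eval_one,
      G.det_lapMatrix_eq_zero_of_isDomain]
  rw [hr, hk, Nat.add_sub_cancel_left, hfactor,
    eval_iterate_derivative_X_sub_C_pow_mul_of_isRoot hroot, G.eval_one_derivative_det_iharaMatrix,
    hk, eval_pow, eval_neg, eval_add, eval_X, eval_one, neg_pow, Nat.add_sub_cancel]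
  push_cast
  ring

/-- For a finite connected simple graph `G` with minimum degree at least 2 and rank
`r = |E| - |V| + 1 ≥ 1`, the `r`-th derivative of `ζ_G(u)⁻¹` at `u = 1` equals
`(-1)^(r-1) · 2^r · r! · (r-1) · κ_G`, where `κ_G` is the number of spanning trees of `G`. -/
theorem iterated_deriv_iharaZetaInv_eval_one {V : Type} [Fintype V] [DecidableEq V]
    (G : SimpleGraph V) [DecidableRel G.Adj]
    (hconn : G.Connected) (hdeg : ∀ v, 2 ≤ G.degree v)
    (hVE : Fintype.card V ≤ G.edgeFinset.card)
    (r : ℕ) (hr : r = G.edgeFinset.card - Fintype.card V + 1) :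
    (derivative^[r] (iharaZetaInv G)).eval 1 =
      (-1 : ℤ) ^ (r - 1) * 2 ^ r * (Nat.factorial r : ℤ) * ((r : ℤ) - 1) *
        (spanningTreeCount G : ℤ) :=
  iterated_deriv_iharaZetaInv_eval_one_general G hconn hVE r hr
end
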